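/- Let L ⊆ ℂ²ⁿ be a positive Lagrangian subspace. Then the real-part map Re_L : L → ℝ²ⁿ, z ↦ Re z, is a bijective real-linear map, and there exists an Ω-compatible complex structure J_L on ℝ²ⁿ such that L = ker P_{J_L}, i.e. z ∈ L if and only if Re z + J_L Im z = 0. -/

import Mathlib

open Matrix

noncomputable section

/-- The standard symplectic matrix `Ω = [[0, −I],[I, 0]]` on `ℝ²ⁿ`. -/
def Omg (n : ℕ) : Matrix (Fin n ⊕ Fin n) (Fin n ⊕ Fin n) ℝ :=
  fromBlocks 0 (-1) 1 0

/-- The complexification of `Ω`. -/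
def OmgC (n : ℕ) : Matrix (Fin n ⊕ Fin n) (Fin n ⊕ Fin n) ℂ :=
  (Omg n).map Complex.ofReal

/-- Componentwise real part of a complex vector. -/
def vecRe {m : Type*} (z : m → ℂ) : m → ℝ := fun i => (z i).re

/-- Componentwise imaginary part of a complex vector. -/
def vecIm {m : Type*} (z : m → ℂ) : m → ℝ := fun i => (z i).im

/-- The hermitian form `h(z,z) = (i/2) z·Ω z̄` measuring positivity of Lagrangian
subspaces (the bar is componentwise complex conjugation). -/
def posform {n : ℕ} (z : Fin n ⊕ Fin n → ℂ) : ℂ :=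
  (Complex.I / 2) * (z ⬝ᵥ OmgC n *ᵥ star z)

/-!
Write `z ∈ L` as `z = x + i y`. Then `(posform z).re = x ⬝ᵥ Ω y`, which is positive unless
`z = 0`; so `Re` is injective on `L`, hence bijective because `dim_ℝ L = 2n`. Thus `L` is the graph
`{x + i T x}` of a real-linear map `T`, and `J` is the matrix of `T`: since `i L = L`, `T² = -1`;
the real and imaginary parts of the Lagrangian condition say that `T` preserves `Ω` and that `ΩT`
is symmetric; `ΩT` is positive since `x ⬝ᵥ Ω T x = (posform (x + i T x)).re`; and `z ∈ L` iff
`Im z = T (Re z)`, i.e. iff `Re z + T (Im z) = 0`.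
-/

section RealForms

variable {m : Type*}

lemma vecRe_star (z : m → ℂ) : vecRe (star z) = vecRe z := by
  ext i; simp [vecRe]

lemma vecIm_star (z : m → ℂ) : vecIm (star z) = -vecIm z := by
  ext i; simp [vecIm]

lemma vecRe_I_smul (z : m → ℂ) : vecRe (Complex.I • z) = -vecIm z := by
  ext i; simp [vecRe, vecIm]

lemma vecIm_I_smul (z : m → ℂ) : vecIm (Complex.I • z) = vecRe z := by
  ext i; simp [vecRe, vecIm]

lemma ext_vecRe_vecIm {z w : m → ℂ} (hre : vecRe z = vecRe w) (him : vecIm z = vecIm w) :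
    z = w :=
  funext fun i => Complex.ext (congrFun hre i) (congrFun him i)

variable [Fintype m]

lemma re_dotProduct_map_ofReal_mulVec (M : Matrix m m ℝ) (z w : m → ℂ) :
    (z ⬝ᵥ M.map Complex.ofReal *ᵥ w).re =
      vecRe z ⬝ᵥ M *ᵥ vecRe w - vecIm z ⬝ᵥ M *ᵥ vecIm w := by
  simp [vecRe, vecIm, dotProduct, mulVec, Complex.re_sum, Complex.mul_re, Complex.mul_im,
    Finset.mul_sum, Finset.sum_sub_distrib]

lemma im_dotProduct_map_ofReal_mulVec (M : Matrix m m ℝ) (z w : m → ℂ) :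
    (z ⬝ᵥ M.map Complex.ofReal *ᵥ w).im =
      vecRe z ⬝ᵥ M *ᵥ vecIm w + vecIm z ⬝ᵥ M *ᵥ vecRe w := by
  simp [vecRe, vecIm, dotProduct, mulVec, Complex.im_sum, Complex.mul_re, Complex.mul_im,
    Finset.mul_sum, Finset.sum_add_distrib]

lemma transpose_mul_mul_eq_of_dotProduct_mulVec {M J : Matrix m m ℝ}
    (h : ∀ x y, (J *ᵥ x) ⬝ᵥ M *ᵥ (J *ᵥ y) = x ⬝ᵥ M *ᵥ y) : Jᵀ * M * J = M := by
  refine ext_iff_mulVec.2 fun y => dotProduct_eq _ _ fun x => ?_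
  rw [dotProduct_comm, ← mulVec_mulVec, ← mulVec_mulVec, dotProduct_mulVec, vecMul_transpose,
    h, dotProduct_comm]

lemma isHermitian_of_dotProduct_mulVec_comm {A : Matrix m m ℝ}
    (h : ∀ x y, x ⬝ᵥ A *ᵥ y = y ⬝ᵥ A *ᵥ x) : A.IsHermitian := by
  rw [isHermitian_iff_isSymm, IsSymm, ext_iff_mulVec]
  refine fun y => dotProduct_eq _ _ fun x => ?_
  rw [mulVec_transpose, ← dotProduct_mulVec, h, dotProduct_comm]

end RealForms

section Symplectic

variable {n : ℕ}

lemma Omg_transpose : (Omg n)ᵀ = -Omg n := by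
  simp [Omg, fromBlocks_transpose, fromBlocks_neg]

lemma dotProduct_Omg_mulVec_comm (x y : Fin n ⊕ Fin n → ℝ) :
    x ⬝ᵥ Omg n *ᵥ y = -(y ⬝ᵥ Omg n *ᵥ x) := by
  rw [dotProduct_mulVec, ← mulVec_transpose, Omg_transpose, neg_mulVec, neg_dotProduct,
    dotProduct_comm]

lemma posform_re (z : Fin n ⊕ Fin n → ℂ) :
    (posform z).re = vecRe z ⬝ᵥ Omg n *ᵥ vecIm z := by
  have him := im_dotProduct_map_ofReal_mulVec (Omg n) z (star z)
  rw [vecRe_star, vecIm_star, mulVec_neg, dotProduct_neg,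
    dotProduct_Omg_mulVec_comm (vecIm z)] at him
  simp only [posform, OmgC, Complex.mul_re, Complex.div_ofNat_re, Complex.I_re, zero_div,
    zero_mul, Complex.div_ofNat_im, Complex.I_im, one_div, him, zero_sub]
  ring

end Symplectic

namespace Submodule

variable {m : Type*} (L : Submodule ℂ (m → ℂ))

def reLm : L →ₗ[ℝ] (m → ℝ) := Complex.reLm.compLeft m ∘ₗ L.subtype.restrictScalars ℝ

def imLm : L →ₗ[ℝ] (m → ℝ) := Complex.imLm.compLeft m ∘ₗ L.subtype.restrictScalars ℝ

@[simp] lemma reLm_apply (z : L) : L.reLm z = vecRe (z : m → ℂ) := rfl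

@[simp] lemma imLm_apply (z : L) : L.imLm z = vecIm (z : m → ℂ) := rfl

variable {L}

section Bijective

variable [Fintype m] {M : Matrix m m ℝ}

lemma injective_reLm
    (hpos : ∀ z ∈ L, z ≠ 0 → 0 < vecRe z ⬝ᵥ M *ᵥ vecIm z) : Function.Injective L.reLm := by
  refine (injective_iff_map_eq_zero _).2 fun z hz => ?_
  by_contra hne
  have := hpos z z.2 (by simpa using hne)
  rw [← reLm_apply, hz, zero_dotProduct] at this
  exact lt_irrefl 0 this

lemma bijective_reLm
    (hpos : ∀ z ∈ L, z ≠ 0 → 0 < vecRe z ⬝ᵥ M *ᵥ vecIm z)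
    (hdim : 2 * Module.finrank ℂ L = Fintype.card m) : Function.Bijective L.reLm := by
  have : FiniteDimensional ℝ L := Module.Finite.trans ℂ L
  have hrank : Module.finrank ℝ L = Module.finrank ℝ (m → ℝ) := by
    rw [← Module.finrank_mul_finrank ℝ ℂ L, Complex.finrank_real_complex, hdim,
      Module.finrank_fintype_fun_eq_card]
  have hinj := injective_reLm hpos
  exact ⟨hinj, (LinearMap.injective_iff_surjective_of_finrank_eq_finrank hrank).1 hinj⟩

end Bijective

variable (hL : Function.Bijective L.reLm)

def imOfRe : (m → ℝ) →ₗ[ℝ] (m → ℝ) :=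
  L.imLm ∘ₗ (LinearEquiv.ofBijective L.reLm hL).symm.toLinearMap

lemma imOfRe_vecRe {z : m → ℂ} (hz : z ∈ L) : imOfRe hL (vecRe z) = vecIm z := by
  have : (LinearEquiv.ofBijective L.reLm hL).symm (vecRe z) = ⟨z, hz⟩ :=
    (LinearEquiv.symm_apply_eq _).2 rfl
  simp [imOfRe, this]

lemma exists_mem_vecRe_eq (x : m → ℝ) :
    ∃ z ∈ L, vecRe z = x ∧ vecIm z = imOfRe hL x := by
  set z := (LinearEquiv.ofBijective L.reLm hL).symm x
  have hre : vecRe (z : m → ℂ) = x := (LinearEquiv.ofBijective L.reLm hL).apply_symm_apply x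
  exact ⟨z, z.2, hre, by rw [← hre, imOfRe_vecRe hL z.2]⟩

lemma imOfRe_imOfRe (x : m → ℝ) : imOfRe hL (imOfRe hL x) = -x := by
  obtain ⟨z, hz, rfl, him⟩ := exists_mem_vecRe_eq hL x
  have := imOfRe_vecRe hL (L.smul_mem Complex.I hz)
  rw [vecRe_I_smul, vecIm_I_smul, him, map_neg] at this
  exact neg_eq_iff_eq_neg.1 this

lemma mem_iff_vecRe_add_imOfRe_vecIm (z : m → ℂ) :
    z ∈ L ↔ vecRe z + imOfRe hL (vecIm z) = 0 := by
  refine ⟨fun hz => ?_, fun hz => ?_⟩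
  · rw [← imOfRe_vecRe hL hz, imOfRe_imOfRe, add_neg_cancel]
  · obtain ⟨w, hw, hre, him⟩ := exists_mem_vecRe_eq hL (vecRe z)
    rw [eq_neg_of_add_eq_zero_left hz, map_neg, imOfRe_imOfRe, neg_neg] at him
    exact ext_vecRe_vecIm hre him ▸ hw

variable [Fintype m] {M : Matrix m m ℝ}

lemma dotProduct_mulVec_imOfRe_self_pos
    (hpos : ∀ z ∈ L, z ≠ 0 → 0 < vecRe z ⬝ᵥ M *ᵥ vecIm z) {x : m → ℝ} (hx : x ≠ 0) :
    0 < x ⬝ᵥ M *ᵥ imOfRe hL x := by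
  obtain ⟨z, hz, rfl, him⟩ := exists_mem_vecRe_eq hL x
  rw [← him]
  exact hpos z hz (by rintro rfl; exact hx rfl)

variable (hLag : ∀ z ∈ L, ∀ z' ∈ L, z ⬝ᵥ M.map Complex.ofReal *ᵥ z' = 0)
include hLag

lemma dotProduct_imOfRe_mulVec_imOfRe (x y : m → ℝ) :
    imOfRe hL x ⬝ᵥ M *ᵥ imOfRe hL y = x ⬝ᵥ M *ᵥ y := by
  obtain ⟨z, hz, rfl, hzi⟩ := exists_mem_vecRe_eq hL x
  obtain ⟨w, hw, rfl, hwi⟩ := exists_mem_vecRe_eq hL y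
  have := congrArg Complex.re (hLag z hz w hw)
  rw [re_dotProduct_map_ofReal_mulVec, Complex.zero_re, hzi, hwi] at this
  linarith

lemma dotProduct_mulVec_imOfRe (x y : m → ℝ) :
    x ⬝ᵥ M *ᵥ imOfRe hL y = -(imOfRe hL x ⬝ᵥ M *ᵥ y) := by
  obtain ⟨z, hz, rfl, hzi⟩ := exists_mem_vecRe_eq hL x
  obtain ⟨w, hw, rfl, hwi⟩ := exists_mem_vecRe_eq hL y
  have := congrArg Complex.im (hLag z hz w hw)
  rw [im_dotProduct_map_ofReal_mulVec, Complex.zero_im, hzi, hwi] at this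
  linarith

end Submodule

open Submodule in
/-- Let `L ⊆ ℂ²ⁿ` be a positive Lagrangian subspace. Then the
real-part map `Re_L : L → ℝ²ⁿ`, `z ↦ Re z`, is a bijective (real-linear) map, and there
exists an `Ω`-compatible complex structure `J_L` (`J_LᵀΩJ_L = Ω`, `J_L² = −I`, `ΩJ_L`
positive definite) such that `L = ker P_{J_L}`, i.e. `z ∈ L ↔ Re z + J_L Im z = 0`. -/
theorem statement6 (n : ℕ) (L : Submodule ℂ (Fin n ⊕ Fin n → ℂ))
    (hdim : Module.finrank ℂ L = n)
    (hLag : ∀ z ∈ L, ∀ z' ∈ L, z ⬝ᵥ OmgC n *ᵥ z' = 0)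
    (hpos : ∀ z ∈ L, z ≠ 0 → (posform z).im = 0 ∧ 0 < (posform z).re) :
    Function.Bijective (fun z : L => vecRe (z : Fin n ⊕ Fin n → ℂ)) ∧
    ∃ J : Matrix (Fin n ⊕ Fin n) (Fin n ⊕ Fin n) ℝ,
      Jᵀ * Omg n * J = Omg n ∧ J * J = -1 ∧ (Omg n * J).PosDef ∧
      ∀ z : Fin n ⊕ Fin n → ℂ, z ∈ L ↔ vecRe z + J *ᵥ vecIm z = 0 := by
  have hpos' : ∀ z ∈ L, z ≠ 0 → 0 < vecRe z ⬝ᵥ Omg n *ᵥ vecIm z := fun z hz hz0 =>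
    posform_re z ▸ (hpos z hz hz0).2
  have hL : Function.Bijective L.reLm := bijective_reLm hpos' (by simp [hdim, two_mul])
  set T := imOfRe hL
  have hJ (x) : LinearMap.toMatrix' T *ᵥ x = T x := LinearMap.toMatrix'_mulVec T x
  refine ⟨hL, LinearMap.toMatrix' T, ?_, ?_, ?_, fun z => ?_⟩
  · refine transpose_mul_mul_eq_of_dotProduct_mulVec fun x y => ?_
    rw [hJ, hJ, dotProduct_imOfRe_mulVec_imOfRe hL hLag]
  · refine ext_iff_mulVec.2 fun x => ?_
    rw [← mulVec_mulVec, hJ, hJ, imOfRe_imOfRe, neg_mulVec, one_mulVec]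
  · refine .of_dotProduct_mulVec_pos (isHermitian_of_dotProduct_mulVec_comm fun x y => ?_)
      fun x hx => ?_
    · rw [← mulVec_mulVec, ← mulVec_mulVec, hJ, hJ, dotProduct_mulVec_imOfRe hL hLag,
        dotProduct_Omg_mulVec_comm, neg_neg]
    · rw [star_trivial, ← mulVec_mulVec, hJ]
      exact dotProduct_mulVec_imOfRe_self_pos hL hpos' hx
  · rw [hJ]
    exact mem_iff_vecRe_add_imOfRe_vecIm hL z
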